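/- Let Q be a finite type, R : Q → Q → Prop a transition relation, F ⊆ Q a set of accepting states, and q ∈ Q. Then the following are equivalent: (1) there exists an infinite run f : ℕ → Q with f 0 = q, R (f n) (f (n+1)) for all n, and {n | f n ∈ Q with f n ∈ F} infinite; (2) there exists a state c ∈ Q reachable from q via a finite R-path, together with a finite R-cycle from c back to c that visits at least one state of F. -/

import Mathlib

/-!
By pigeonhole, a run visiting `F` infinitely often visits some accepting state `c` twice, at
times `n₁ < n₂`; the run up to `n₁` is the stem and the segment from `n₁` to `n₂` is the cycle.
Conversely, the stem followed by the cycle repeated forever is a run, and the periodicity of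
the repetition makes the accepting visit recur infinitely often.
-/

section Lasso

variable {Q : Type*} {R : Q → Q → Prop}

def cycleRun (y : ℕ → Q) (m : ℕ) (n : ℕ) : Q := y (n % m)

lemma cycleRun_periodic (y : ℕ → Q) (m : ℕ) : Function.Periodic (cycleRun y m) m :=
  (Nat.periodic_mod m).comp y

lemma cycleRun_of_le {y : ℕ → Q} {m i : ℕ} (hym : y m = y 0) (hi : i ≤ m) :
    cycleRun y m i = y i := by
  rcases hi.lt_or_eq with hi | rfl
  · exact congrArg y (Nat.mod_eq_of_lt hi)
  · rw [cycleRun, Nat.mod_self, hym]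

lemma cycleRun_step {y : ℕ → Q} {m : ℕ} (hm : 0 < m) (hym : y m = y 0)
    (hy : ∀ i < m, R (y i) (y (i + 1))) (n : ℕ) :
    R (cycleRun y m n) (cycleRun y m (n + 1)) := by
  have hper := cycleRun_periodic y m
  have hr : n % m < m := Nat.mod_lt n hm
  have hsucc : cycleRun y m (n + 1) = cycleRun y m (n % m + 1) := by
    rw [← hper.nat_mul (n / m) (n % m + 1), Nat.cast_id]
    congr 1
    have := Nat.mod_add_div' n m
    omega
  rw [hsucc, ← hper.map_mod_nat n, cycleRun_of_le hym hr.le, cycleRun_of_le hym hr]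
  exact hy _ hr

lemma Function.Periodic.infinite_setOf_mem {g : ℕ → Q} {m : ℕ} (hg : Function.Periodic g m)
    (hm : 0 < m) {F : Set Q} {i : ℕ} (hi : g i ∈ F) : {n | g n ∈ F}.Infinite :=
  Set.infinite_of_forall_exists_gt fun a =>
    ⟨i + (a + 1) * m, by rwa [Set.mem_ofPred_eq, ← Nat.cast_id (a + 1), hg.nat_mul (a + 1) i], by
      nlinarith⟩

def appendRun (x : ℕ → Q) (k : ℕ) (g : ℕ → Q) (n : ℕ) : Q :=
  if n < k then x n else g (n - k)

lemma appendRun_of_le {x g : ℕ → Q} {k n : ℕ} (hxg : x k = g 0) (hn : n ≤ k) :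
    appendRun x k g n = x n := by
  rcases hn.lt_or_eq with hn | rfl
  · exact if_pos hn
  · rw [appendRun, if_neg (lt_irrefl n), Nat.sub_self, hxg]

lemma appendRun_add (x : ℕ → Q) (k : ℕ) (g : ℕ → Q) (n : ℕ) :
    appendRun x k g (k + n) = g n := by
  rw [appendRun, if_neg (by omega), Nat.add_sub_cancel_left]

lemma appendRun_step {x g : ℕ → Q} {k : ℕ} (hxg : x k = g 0)
    (hx : ∀ i < k, R (x i) (x (i + 1))) (hg : ∀ n, R (g n) (g (n + 1))) (n : ℕ) :
    R (appendRun x k g n) (appendRun x k g (n + 1)) := by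
  rcases lt_or_ge n k with hn | hn
  · rw [appendRun_of_le hxg hn.le, appendRun_of_le hxg hn]
    exact hx n hn
  · obtain ⟨d, rfl⟩ := Nat.exists_eq_add_of_le hn
    rw [add_assoc, appendRun_add, appendRun_add]
    exact hg d

lemma infinite_setOf_appendRun_mem (x : ℕ → Q) (k : ℕ) {g : ℕ → Q} {F : Set Q}
    (hg : {n | g n ∈ F}.Infinite) : {n | appendRun x k g n ∈ F}.Infinite := by
  refine (hg.image (add_right_injective k).injOn).mono ?_
  rintro _ ⟨n, hn, rfl⟩
  simpa only [Set.mem_ofPred_eq, appendRun_add] using hn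

lemma exists_lt_eq_mem_of_infinite_setOf_mem [Finite Q] {f : ℕ → Q} {F : Set Q}
    (hf : {n | f n ∈ F}.Infinite) : ∃ n₁ n₂, n₁ < n₂ ∧ f n₁ = f n₂ ∧ f n₁ ∈ F := by
  obtain ⟨n₁, h₁, n₂, -, hlt, heq⟩ := hf.exists_lt_map_eq_of_mapsTo (Set.mapsTo_univ f _)
    Set.finite_univ
  exact ⟨n₁, n₂, hlt, heq, h₁⟩

end Lasso

/-- over a finite state space `Q` with transition relation `R` and accepting
set `F`, there exists an infinite run from `q` visiting `F` infinitely often iff there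
exists a state `c` reachable from `q` by a finite `R`-path together with a finite `R`-cycle
from `c` back to `c` that visits `F`. -/
theorem accepting_run_iff_lasso {Q : Type} [Fintype Q]
    (R : Q → Q → Prop) (F : Set Q) (q : Q) :
    (∃ f : ℕ → Q, f 0 = q ∧ (∀ n, R (f n) (f (n + 1))) ∧ {n : ℕ | f n ∈ F}.Infinite) ↔
      (∃ c : Q,
        (∃ (x : ℕ → Q) (k : ℕ), x 0 = q ∧ x k = c ∧ ∀ i < k, R (x i) (x (i + 1))) ∧
        (∃ (y : ℕ → Q) (m : ℕ), 1 ≤ m ∧ y 0 = c ∧ y m = c ∧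
          (∀ i < m, R (y i) (y (i + 1))) ∧ ∃ i ≤ m, y i ∈ F)) := by
  constructor
  · rintro ⟨f, rfl, hf, hfF⟩
    obtain ⟨n₁, n₂, hlt, heq, hF⟩ := exists_lt_eq_mem_of_infinite_setOf_mem hfF
    refine ⟨f n₁, ⟨f, n₁, rfl, rfl, fun i _ => hf i⟩,
      ⟨fun i => f (n₁ + i), n₂ - n₁, by omega, rfl, by simp only [Nat.add_sub_cancel' hlt.le, heq],
        fun i _ => hf (n₁ + i), 0, Nat.zero_le _, hF⟩⟩
  · rintro ⟨c, ⟨x, k, rfl, hxk, hx⟩, ⟨y, m, hm, hy0, hym, hy, i, hi, hiF⟩⟩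
    have hxg : x k = cycleRun y m 0 := by rw [cycleRun, Nat.zero_mod, hy0, hxk]
    have hym' : y m = y 0 := hym.trans hy0.symm
    refine ⟨appendRun x k (cycleRun y m), appendRun_of_le hxg k.zero_le,
      appendRun_step hxg hx (cycleRun_step hm hym' hy), infinite_setOf_appendRun_mem x k ?_⟩
    exact (cycleRun_periodic y m).infinite_setOf_mem hm (by rwa [cycleRun_of_le hym' hi])
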